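/- Let Z be a contact element for l ⊆ g and m^{10} a holomorphic subspace of m^ℂ defining a standard invariant CR structure, i.e. m^{10} is ad_k-invariant for k = l + ℝZ. Then the normalizer in g of l^ℂ + m^{01} equals k: N_g(l^ℂ + m^{01}) = l + ℝZ. Consequently the image of the anticanonical map φ(gL) = Ad_g(l^ℂ + m^{01}) is the flag manifold F_Z = G/K with K = C_G(Z), and φ : G/L → F_Z is the natural S^1-fibration. -/

import Mathlib

noncomputable section

open scoped TensorProduct

namespace CRPaper

variable {g : Type} [LieRing g] [LieAlgebra ℝ g] [FiniteDimensional ℝ g]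

/-- `B` is an `Ad`-invariant (Euclidean) inner product on the real Lie algebra `g`;
its existence encodes that `g` is a *compact* Lie algebra. -/
structure IsInvariantInner (B : g →ₗ[ℝ] g →ₗ[ℝ] ℝ) : Prop where
  symm : ∀ x y : g, B x y = B y x
  posdef : ∀ x : g, x ≠ 0 → 0 < B x x
  invariant : ∀ x y z : g, B ⁅x, y⁆ z + B y ⁅x, z⁆ = 0

/-- The canonical inclusion of `g` in its complexification `g^ℂ = ℂ ⊗[ℝ] g`. -/
def inclL : g →ₗ[ℝ] ℂ ⊗[ℝ] g := TensorProduct.mk ℝ ℂ g 1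

/-- Conjugation of the complexification `g^ℂ` with respect to the real form `g`,
as an `ℝ`-linear map. -/
def conjA : ℂ ⊗[ℝ] g →ₗ[ℝ] ℂ ⊗[ℝ] g :=
  TensorProduct.map Complex.conjAe.toLinearMap LinearMap.id

/-- `Z` is a *contact element* for the subalgebra `l ⊆ g`:  it is a nonzero vector,
orthogonal to `l` w.r.t. `B`, whose centralizer is exactly `l ⊕ ℝ Z`. -/
structure IsContactElement (B : g →ₗ[ℝ] g →ₗ[ℝ] ℝ) (l : LieSubalgebra ℝ g) (Z : g) :
    Prop where
  ne_zero : Z ≠ 0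
  orth : ∀ y ∈ l, B Z y = 0
  cent : ∀ x : g, ⁅x, Z⁆ = 0 ↔ ∃ y ∈ l, ∃ c : ℝ, x = y + c • Z

/-- The subspace `k = l + ℝ Z` (the centralizer of the contact element). -/
def kSub (l : LieSubalgebra ℝ g) (Z : g) : Submodule ℝ g :=
  l.toSubmodule ⊔ (Submodule.span ℝ {Z})

/-- The subspace `m`: the `B`-orthogonal complement of `k = l + ℝ Z` in `g`. -/
def mSub (B : g →ₗ[ℝ] g →ₗ[ℝ] ℝ) (l : LieSubalgebra ℝ g) (Z : g) : Submodule ℝ g where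
  carrier := {x : g | ∀ y ∈ kSub l Z, B x y = 0}
  add_mem' := by intro a b ha hb y hy; rw [map_add, LinearMap.add_apply, ha y hy, hb y hy,
    add_zero]
  zero_mem' := by intro y hy; rw [map_zero, LinearMap.zero_apply]
  smul_mem' := by intro c a ha y hy; rw [map_smul, LinearMap.smul_apply, ha y hy, smul_zero]

/-- Complexification of a real subspace of `g`, as a subspace of `g^ℂ`. -/
def cx (p : Submodule ℝ g) : Submodule ℂ (ℂ ⊗[ℝ] g) := p.baseChange ℂ

/-- The conjugate of a complex subspace of `g^ℂ` (w.r.t. the real form `g`). -/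
def conjSpan (W : Submodule ℂ (ℂ ⊗[ℝ] g)) : Submodule ℂ (ℂ ⊗[ℝ] g) :=
  Submodule.span ℂ (conjA '' (W : Set (ℂ ⊗[ℝ] g)))

/-- A *holomorphic subspace* `m¹⁰ ⊆ m^ℂ`: it intersects its conjugate `m⁰¹` trivially,
together with `m⁰¹` it spans `m^ℂ`, and `l^ℂ + m¹⁰` is a subalgebra of `g^ℂ`
(the integrability condition).  Holomorphic subspaces correspond exactly to the
invariant CR structures `(D_Z, J)` on `G/L` subordinate to the invariant contact
structure `D_Z`. -/
structure IsHolo (B : g →ₗ[ℝ] g →ₗ[ℝ] ℝ) (l : LieSubalgebra ℝ g) (Z : g)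
    (m10 : Submodule ℂ (ℂ ⊗[ℝ] g)) : Prop where
  le : m10 ≤ cx (mSub B l Z)
  inf_conj : m10 ⊓ conjSpan m10 = ⊥
  sup_conj : cx (mSub B l Z) ≤ m10 ⊔ conjSpan m10
  subalg : ∀ x ∈ cx l.toSubmodule ⊔ m10, ∀ y ∈ cx l.toSubmodule ⊔ m10,
      ⁅x, y⁆ ∈ cx l.toSubmodule ⊔ m10

/-- The invariant CR structure determined by the holomorphic subspace `m¹⁰` is *standard*:
`m¹⁰` is invariant under the adjoint action of `k = l + ℝ Z`. -/
def IsStandard (l : LieSubalgebra ℝ g) (Z : g) (m10 : Submodule ℂ (ℂ ⊗[ℝ] g)) : Prop :=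
  ∀ x ∈ kSub l Z, ∀ v ∈ m10, ⁅inclL x, v⁆ ∈ m10

/-- A Cartan subalgebra of the compact Lie algebra `g`: a maximal abelian subalgebra. -/
structure IsCartan (h : LieSubalgebra ℝ g) : Prop where
  abelian : ∀ x ∈ h, ∀ y ∈ h, ⁅x, y⁆ = 0
  maximal : ∀ x : g, (∀ y ∈ h, ⁅x, y⁆ = 0) → x ∈ h

/-- The root space of `(g^ℂ, h^ℂ)` attached to the vector `t ∈ h ⊆ g`;  here a root `α` is
identified with the vector `t = t_α ∈ h` such that `α(x) = i·B(t, x)` for all `x ∈ h`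
(the identification being made via the invariant inner product `B`). -/
def rootSpace (B : g →ₗ[ℝ] g →ₗ[ℝ] ℝ) (h : LieSubalgebra ℝ g) (t : g) :
    Submodule ℂ (ℂ ⊗[ℝ] g) where
  carrier := {X | ∀ x ∈ h, ⁅inclL x, X⁆ = (Complex.I * (B t x : ℝ)) • X}
  add_mem' := by
    intro a b ha hb x hx
    have h1 : ⁅inclL x, a + b⁆ = ⁅inclL x, a⁆ + ⁅inclL x, b⁆ := lie_add (inclL x) a b
    rw [h1, ha x hx, hb x hx, smul_add]
  zero_mem' := by
    intro x hx
    have h1 : ⁅inclL x, (0 : ℂ ⊗[ℝ] g)⁆ = 0 := lie_zero (inclL x)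
    rw [h1, smul_zero]
  smul_mem' := by
    intro c a ha x hx
    have h1 : ⁅inclL x, c • a⁆ = c • ⁅inclL x, a⁆ := lie_smul c (inclL x) a
    rw [h1, ha x hx, smul_comm]

/-- `t ∈ h` represents a root of `(g^ℂ, h^ℂ)` via `α = i·B(t, ·)`. -/
def IsRootVec (B : g →ₗ[ℝ] g →ₗ[ℝ] ℝ) (h : LieSubalgebra ℝ g) (t : g) : Prop :=
  t ∈ h ∧ t ≠ 0 ∧ rootSpace B h t ≠ ⊥

/-- The set of (vectors in `h` representing) roots of `(g^ℂ, h^ℂ)`. -/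
def rootSet (B : g →ₗ[ℝ] g →ₗ[ℝ] ℝ) (h : LieSubalgebra ℝ g) : Set g :=
  {t | IsRootVec B h t}

/-- Since the contact form `ϑ = -i·B(Z,·)` corresponds to (a multiple of) the vector `Z`
under the identification of roots with vectors, two roots `a`, `b` are *ϑ-congruent*
iff they differ by a real multiple of `Z`. -/
def ThetaCongruent (Z : g) (a b : g) : Prop := ∃ lam : ℝ, b = a + lam • Z

/-- The contact form `ϑ = -i·B(Z,·)` is proportional to the root (vector) `t`. -/
def PropToRoot (Z t : g) : Prop := ∃ c : ℝ, c ≠ 0 ∧ Z = c • t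

/-- A subset `P` of the set of roots `R` is a positive system. -/
structure IsPositiveSystem (R P : Set g) : Prop where
  subset : P ⊆ R
  total : ∀ t ∈ R, t ∈ P ∨ -t ∈ P
  not_neg : ∀ t ∈ P, -t ∉ P
  closed : ∀ s ∈ P, ∀ t ∈ P, s + t ∈ R → s + t ∈ P

/-- `W` is a submodule for (i.e. invariant under the bracket action of) the
subspace `a ⊆ g^ℂ`. -/
def IsInvSubmod (a W : Submodule ℂ (ℂ ⊗[ℝ] g)) : Prop :=
  ∀ x ∈ a, ∀ w ∈ W, ⁅x, w⁆ ∈ W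

/-- `W` is an irreducible `a`-submodule of `g^ℂ`. -/
def IsIrredOf (a W : Submodule ℂ (ℂ ⊗[ℝ] g)) : Prop :=
  W ≠ ⊥ ∧ IsInvSubmod a W ∧ ∀ W' ≤ W, IsInvSubmod a W' → W' = ⊥ ∨ W' = W

/-- The smallest `a`-invariant subspace of `g^ℂ` containing the vector `v`. -/
def genSubmod (a : Submodule ℂ (ℂ ⊗[ℝ] g)) (v : ℂ ⊗[ℝ] g) : Submodule ℂ (ℂ ⊗[ℝ] g) :=
  sInf {W | v ∈ W ∧ IsInvSubmod a W}

/-- `W` and `W'` are isomorphic as modules for the subspace `a ⊆ g^ℂ`. -/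
def ModIso (a W W' : Submodule ℂ (ℂ ⊗[ℝ] g)) : Prop :=
  ∃ f : (ℂ ⊗[ℝ] g) →ₗ[ℂ] (ℂ ⊗[ℝ] g),
    (∀ w ∈ W, f w ∈ W') ∧ (∀ w ∈ W, f w = 0 → w = 0) ∧
    (∀ w' ∈ W', ∃ w ∈ W, f w = w') ∧
    (∀ x ∈ a, ∀ w ∈ W, f ⁅x, w⁆ = ⁅x, f w⁆)

/-- `W ⊆ g^ℂ` has highest weight (represented by the vector) `t ∈ h`, with respect to the
positive system `P`: it contains a nonzero weight vector of weight `t` annihilated by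
all the root vectors of positive roots. -/
def HasHighestWeight (B : g →ₗ[ℝ] g →ₗ[ℝ] ℝ) (h : LieSubalgebra ℝ g) (P : Set g)
    (W : Submodule ℂ (ℂ ⊗[ℝ] g)) (t : g) : Prop :=
  ∃ v ∈ W ⊓ rootSpace B h t, v ≠ 0 ∧ ∀ s ∈ P, ∀ X ∈ rootSpace B h s, ⁅X, v⁆ = 0

/-- The real points of a complex subspace `W ⊆ g^ℂ`: `{x ∈ g | x ∈ W}`. -/
def realPts (W : Submodule ℂ (ℂ ⊗[ℝ] g)) : Submodule ℝ g :=
  (W.restrictScalars ℝ).comap inclL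

/-- The normalizer in `g` of the subspace `l^ℂ + m⁰¹ ⊆ g^ℂ`  (the Lie algebra of the
stabilizer of the image point of the anticanonical map `φ(gL) = Ad_g(l^ℂ + m⁰¹)`). -/
def normSet (l : LieSubalgebra ℝ g) (m10 : Submodule ℂ (ℂ ⊗[ℝ] g)) : Set g :=
  {x : g | ∀ v ∈ cx l.toSubmodule ⊔ conjSpan m10,
    ⁅inclL x, v⁆ ∈ cx l.toSubmodule ⊔ conjSpan m10}

/-- The homogeneous CR manifold determined by `(l, Z, m¹⁰)` admits a non-trivial CRF
fibration (i.e. it is *non-primitive*), encoded via Lemma 4.8 of the paper:  there is a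
proper parabolic subalgebra `p ⊆ g^ℂ` (parabolicity being encoded by `p + σ(p) = g^ℂ`,
its reductive part being `r = p ⊓ σ(p) = ((p ∩ g)^ℂ)`) such that `l^ℂ + m¹⁰ ⊆ p` and
`l^ℂ ⊊ r`. -/
def HasCRF (l : LieSubalgebra ℝ g) (m10 : Submodule ℂ (ℂ ⊗[ℝ] g)) : Prop :=
  ∃ p : Submodule ℂ (ℂ ⊗[ℝ] g),
    (∀ x ∈ p, ∀ y ∈ p, ⁅x, y⁆ ∈ p) ∧
    p ≠ ⊤ ∧
    (∀ v : ℂ ⊗[ℝ] g, ∃ a ∈ p, ∃ b ∈ p, v = a + conjA b) ∧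
    cx l.toSubmodule ⊔ m10 ≤ p ∧
    (∃ v ∈ p ⊓ conjSpan p, v ∉ cx l.toSubmodule)

/-- The CR structure is *circular*: it admits a CRF fibration with one-dimensional
(i.e. `S¹`) fiber `Q/L`, `Lie(Q) = r ∩ g`. -/
def IsCircular (l : LieSubalgebra ℝ g) (m10 : Submodule ℂ (ℂ ⊗[ℝ] g)) : Prop :=
  ∃ p : Submodule ℂ (ℂ ⊗[ℝ] g),
    (∀ x ∈ p, ∀ y ∈ p, ⁅x, y⁆ ∈ p) ∧
    p ≠ ⊤ ∧
    (∀ v : ℂ ⊗[ℝ] g, ∃ a ∈ p, ∃ b ∈ p, v = a + conjA b) ∧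
    cx l.toSubmodule ⊔ m10 ≤ p ∧
    Module.finrank ℝ (realPts (p ⊓ conjSpan p)) = Module.finrank ℝ l.toSubmodule + 1

end CRPaper

namespace CRPaper


section Aux
variable {g : Type} [LieRing g] [LieAlgebra ℝ g]

/-- second inclusion `y ↦ i ⊗ y`. -/
def jL : g →ₗ[ℝ] ℂ ⊗[ℝ] g := TensorProduct.mk ℝ ℂ g Complex.I

lemma inclL_apply (x : g) : inclL x = (1:ℂ) ⊗ₜ[ℝ] x := rfl
lemma jL_apply (x : g) : jL x = (Complex.I) ⊗ₜ[ℝ] x := rfl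

lemma lie_tmul (c d : ℂ) (x y : g) :
    ⁅(c ⊗ₜ[ℝ] x : ℂ ⊗[ℝ] g), d ⊗ₜ[ℝ] y⁆ = (c * d) ⊗ₜ[ℝ] ⁅x, y⁆ :=
  rfl

-- bridge lemmas: restate generic Lie algebra identities with the ambient bracket instance
lemma lieC_add (u a b : ℂ ⊗[ℝ] g) : ⁅u, a + b⁆ = ⁅u, a⁆ + ⁅u, b⁆ := lie_add u a b
lemma addC_lie (a b u : ℂ ⊗[ℝ] g) : ⁅a + b, u⁆ = ⁅a, u⁆ + ⁅b, u⁆ := add_lie a b u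
lemma lieC_smul (c : ℂ) (u v : ℂ ⊗[ℝ] g) : ⁅u, c • v⁆ = c • ⁅u, v⁆ := lie_smul c u v
lemma smulC_lie (c : ℂ) (u v : ℂ ⊗[ℝ] g) : ⁅c • u, v⁆ = c • ⁅u, v⁆ := smul_lie c u v
lemma lieC_zero (u : ℂ ⊗[ℝ] g) : ⁅u, (0 : ℂ ⊗[ℝ] g)⁆ = 0 := lie_zero u
lemma zeroC_lie (u : ℂ ⊗[ℝ] g) : ⁅(0 : ℂ ⊗[ℝ] g), u⁆ = 0 := zero_lie u
lemma lieC_sub (u a b : ℂ ⊗[ℝ] g) : ⁅u, a - b⁆ = ⁅u, a⁆ - ⁅u, b⁆ := lie_sub u a b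
lemma subC_lie (a b u : ℂ ⊗[ℝ] g) : ⁅a - b, u⁆ = ⁅a, u⁆ - ⁅b, u⁆ := sub_lie a b u
lemma negC_lie (a u : ℂ ⊗[ℝ] g) : ⁅-a, u⁆ = -⁅a, u⁆ := neg_lie a u
lemma lieC_neg (u a : ℂ ⊗[ℝ] g) : ⁅u, -a⁆ = -⁅u, a⁆ := lie_neg u a
lemma lieC_lie (a b c : ℂ ⊗[ℝ] g) : ⁅⁅a, b⁆, c⁆ = ⁅a, ⁅b, c⁆⁆ - ⁅b, ⁅a, c⁆⁆ := lie_lie a b c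
lemma lieC_skew (a b : ℂ ⊗[ℝ] g) : ⁅a, b⁆ = -⁅b, a⁆ := (lie_skew a b).symm

lemma inclL_lie (x y : g) : inclL ⁅x, y⁆ = ⁅inclL x, inclL y⁆ := by
  simp [inclL_apply, lie_tmul]

lemma smul_tmul_c (c d : ℂ) (x : g) : c • (d ⊗ₜ[ℝ] x) = (c * d) ⊗ₜ[ℝ] x := rfl

lemma conjA_tmul (c : ℂ) (x : g) :
    conjA (c ⊗ₜ[ℝ] x) = (starRingEnd ℂ c) ⊗ₜ[ℝ] x := rfl

lemma conjA_conjA (v : ℂ ⊗[ℝ] g) : conjA (conjA v) = v := by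
  induction v using TensorProduct.induction_on with
  | zero => simp
  | tmul c x => simp [conjA_tmul]
  | add u w hu hw => simp [map_add, hu, hw]

lemma conjA_smul (c : ℂ) (v : ℂ ⊗[ℝ] g) :
    conjA (c • v) = (starRingEnd ℂ c) • conjA v := by
  induction v using TensorProduct.induction_on with
  | zero => simp
  | tmul d x => simp [smul_tmul_c, conjA_tmul]
  | add u w hu hw => simp [smul_add, map_add, hu, hw]

lemma conjA_lie (u v : ℂ ⊗[ℝ] g) : conjA ⁅u, v⁆ = ⁅conjA u, conjA v⁆ := by
  induction u using TensorProduct.induction_on with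
  | zero => rw [zeroC_lie, map_zero]; exact (zeroC_lie _).symm
  | tmul c x =>
    induction v using TensorProduct.induction_on with
    | zero => rw [lieC_zero, map_zero]; exact (lieC_zero _).symm
    | tmul d y => simp [lie_tmul, conjA_tmul]
    | add a b ha hb => rw [lieC_add, map_add, ha, hb, map_add, lieC_add]
  | add a b ha hb => rw [addC_lie, map_add, ha, hb, map_add, addC_lie]

lemma conjA_inclL (x : g) : conjA (inclL x) = inclL x := by
  simp [inclL_apply, conjA_tmul]

lemma conjA_jL (x : g) : conjA (jL x) = - jL x := by
  rw [jL_apply, conjA_tmul]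
  rw [show (starRingEnd ℂ) Complex.I = -Complex.I from Complex.conj_I]
  rw [TensorProduct.neg_tmul]

/-- real part projection -/
def reT : ℂ ⊗[ℝ] g →ₗ[ℝ] g :=
  (TensorProduct.lid ℝ g).toLinearMap ∘ₗ TensorProduct.map Complex.reLm LinearMap.id

def imT : ℂ ⊗[ℝ] g →ₗ[ℝ] g :=
  (TensorProduct.lid ℝ g).toLinearMap ∘ₗ TensorProduct.map Complex.imLm LinearMap.id

lemma reT_tmul (c : ℂ) (x : g) : reT (c ⊗ₜ[ℝ] x) = c.re • x := by
  simp [reT, Complex.reLm]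

lemma imT_tmul (c : ℂ) (x : g) : imT (c ⊗ₜ[ℝ] x) = c.im • x := by
  simp [imT, Complex.imLm]

lemma reT_inclL (x : g) : reT (inclL x) = x := by simp [inclL_apply, reT_tmul]
lemma reT_jL (x : g) : reT (jL x) = 0 := by simp [jL_apply, reT_tmul]
lemma imT_inclL (x : g) : imT (inclL x) = 0 := by simp [inclL_apply, imT_tmul]
lemma imT_jL (x : g) : imT (jL x) = x := by simp [jL_apply, imT_tmul]

lemma inclL_smul_real (r : ℝ) (x : g) : inclL (r • x) = (r : ℂ) ⊗ₜ[ℝ] x := by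
  rw [map_smul, inclL_apply, TensorProduct.smul_tmul', show r • (1:ℂ) = (r:ℂ) by
    rw [Complex.real_smul, mul_one]]

lemma jL_smul_real (r : ℝ) (x : g) : jL (r • x) = ((r : ℂ) * Complex.I) ⊗ₜ[ℝ] x := by
  rw [map_smul, jL_apply, TensorProduct.smul_tmul', show r • Complex.I = (r:ℂ) * Complex.I by
    rw [Complex.real_smul]]

lemma repr_eq (v : ℂ ⊗[ℝ] g) : v = inclL (reT v) + jL (imT v) := by
  induction v using TensorProduct.induction_on with
  | zero => simp
  | tmul c x =>
    rw [reT_tmul, imT_tmul, inclL_smul_real, jL_smul_real, ← TensorProduct.add_tmul,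
      show (c.re : ℂ) + (c.im : ℂ) * Complex.I = c from Complex.re_add_im c]
  | add u w hu hw =>
    conv_lhs => rw [hu, hw]
    rw [map_add, map_add, map_add, map_add]
    abel

lemma inclL_jL_eq_zero {x y : g} (h : inclL x + jL y = 0) : x = 0 ∧ y = 0 := by
  constructor
  · have := congrArg reT h
    simpa [map_add, reT_inclL, reT_jL] using this
  · have := congrArg imT h
    simpa [map_add, imT_inclL, imT_jL] using this

lemma inclL_inj {x : g} (h : inclL x = 0) : x = 0 := by
  have := congrArg reT h
  simpa [reT_inclL] using this

lemma inclL_mem_cx {p : Submodule ℝ g} {x : g} (hx : x ∈ p) : inclL x ∈ cx p :=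
  Submodule.tmul_mem_baseChange_of_mem 1 hx

lemma jL_mem_cx {p : Submodule ℝ g} {x : g} (hx : x ∈ p) : jL x ∈ cx p :=
  Submodule.tmul_mem_baseChange_of_mem Complex.I hx

lemma smul_repr (c : ℂ) (x y : g) :
    c • (inclL x + jL y) = inclL (c.re • x - c.im • y) + jL (c.im • x + c.re • y) := by
  have e1 : inclL (c.re • x - c.im • y) = (c.re : ℂ) ⊗ₜ[ℝ] x - (c.im : ℂ) ⊗ₜ[ℝ] y := by
    rw [map_sub, inclL_smul_real, inclL_smul_real]
  have e2 : jL (c.im • x + c.re • y)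
      = ((c.im : ℂ) * Complex.I) ⊗ₜ[ℝ] x + ((c.re : ℂ) * Complex.I) ⊗ₜ[ℝ] y := by
    rw [map_add, jL_smul_real, jL_smul_real]
  rw [smul_add, inclL_apply, jL_apply, smul_tmul_c, smul_tmul_c, e1, e2]
  have e3 : ((c.re : ℂ) ⊗ₜ[ℝ] x - (c.im : ℂ) ⊗ₜ[ℝ] y)
      + (((c.im : ℂ) * Complex.I) ⊗ₜ[ℝ] x + ((c.re : ℂ) * Complex.I) ⊗ₜ[ℝ] y)
      = ((c.re : ℂ) + (c.im : ℂ) * Complex.I) ⊗ₜ[ℝ] x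
        + ((c.re : ℂ) * Complex.I - (c.im : ℂ)) ⊗ₜ[ℝ] y := by
    rw [TensorProduct.add_tmul, TensorProduct.sub_tmul]; abel
  rw [e3, show (c.re : ℂ) + (c.im : ℂ) * Complex.I = c from Complex.re_add_im c,
    show (c.re : ℂ) * Complex.I - (c.im : ℂ) = c * Complex.I by
      simp [Complex.ext_iff],
    mul_one]

lemma mem_cx {p : Submodule ℝ g} {v : ℂ ⊗[ℝ] g} :
    v ∈ cx p ↔ ∃ x ∈ p, ∃ y ∈ p, v = inclL x + jL y := by
  constructor
  · intro hv
    rw [cx, Submodule.baseChange_eq_span] at hv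
    refine Submodule.span_induction ?_ ?_ ?_ ?_ hv
    · rintro _ ⟨x, hx, rfl⟩
      exact ⟨x, hx, 0, p.zero_mem, by simp [inclL_apply]⟩
    · exact ⟨0, p.zero_mem, 0, p.zero_mem, by simp⟩
    · rintro u w - - ⟨x, hx, y, hy, rfl⟩ ⟨x', hx', y', hy', rfl⟩
      exact ⟨x + x', p.add_mem hx hx', y + y', p.add_mem hy hy', by
        rw [map_add, map_add]; abel⟩
    · rintro c u - ⟨x, hx, y, hy, rfl⟩
      exact ⟨c.re • x - c.im • y, p.sub_mem (p.smul_mem _ hx) (p.smul_mem _ hy),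
        c.im • x + c.re • y, p.add_mem (p.smul_mem _ hx) (p.smul_mem _ hy),
        (smul_repr c x y).symm ▸ rfl⟩
  · rintro ⟨x, hx, y, hy, rfl⟩
    exact (cx p).add_mem (inclL_mem_cx hx) (jL_mem_cx hy)

lemma reT_mem_cx {p : Submodule ℝ g} {v : ℂ ⊗[ℝ] g} (hv : v ∈ cx p) :
    reT v ∈ p ∧ imT v ∈ p := by
  obtain ⟨x, hx, y, hy, rfl⟩ := mem_cx.1 hv
  rw [map_add, map_add, reT_inclL, reT_jL, imT_inclL, imT_jL, add_zero, zero_add]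
  exact ⟨hx, hy⟩

lemma inclL_mem_cx_iff {p : Submodule ℝ g} {x : g} : inclL x ∈ cx p ↔ x ∈ p := by
  refine ⟨fun h => ?_, inclL_mem_cx⟩
  have := (reT_mem_cx h).1
  rwa [reT_inclL] at this

lemma conjA_mem_cx {p : Submodule ℝ g} {v : ℂ ⊗[ℝ] g} (hv : v ∈ cx p) :
    conjA v ∈ cx p := by
  obtain ⟨x, hx, y, hy, rfl⟩ := mem_cx.1 hv
  rw [map_add, conjA_inclL, conjA_jL]
  exact mem_cx.2 ⟨x, hx, -y, p.neg_mem hy, by rw [map_neg]⟩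

lemma cx_mono {p p' : Submodule ℝ g} (h : p ≤ p') : cx p ≤ cx p' := by
  intro v hv
  obtain ⟨x, hx, y, hy, rfl⟩ := mem_cx.1 hv
  exact mem_cx.2 ⟨x, h hx, y, h hy, rfl⟩

section B
variable (B : g →ₗ[ℝ] g →ₗ[ℝ] ℝ)

/-- complex bilinear extension of `B` -/
def Bc : (ℂ ⊗[ℝ] g) →ₗ[ℂ] (ℂ ⊗[ℝ] g) →ₗ[ℂ] ℂ := LinearMap.BilinForm.baseChange ℂ B

lemma Bc_tmul (c d : ℂ) (x y : g) :
    Bc B (c ⊗ₜ[ℝ] x) (d ⊗ₜ[ℝ] y) = B x y • (c * d) := rfl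

lemma Bc_symm (hB : IsInvariantInner B) (u v : ℂ ⊗[ℝ] g) : Bc B u v = Bc B v u := by
  induction u using TensorProduct.induction_on with
  | zero => simp
  | tmul c x =>
    induction v using TensorProduct.induction_on with
    | zero => simp
    | tmul d y => rw [Bc_tmul, Bc_tmul, hB.symm x y, mul_comm]
    | add a b ha hb => simp only [map_add, LinearMap.add_apply, ha, hb]
  | add a b ha hb => simp only [map_add, LinearMap.add_apply, ha, hb]

lemma Bc_inv (hB : IsInvariantInner B) (u v w : ℂ ⊗[ℝ] g) :
    Bc B ⁅u, v⁆ w = - Bc B v ⁅u, w⁆ := by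
  induction u using TensorProduct.induction_on with
  | zero => simp [zeroC_lie]
  | tmul c x =>
    induction v using TensorProduct.induction_on with
    | zero => simp [lieC_zero, zeroC_lie]
    | tmul d y =>
      induction w using TensorProduct.induction_on with
      | zero => simp [lieC_zero]
      | tmul e z =>
        rw [lie_tmul, lie_tmul, Bc_tmul, Bc_tmul]
        have := hB.invariant x y z
        have h1 : B ⁅x, y⁆ z = - B y ⁅x, z⁆ := by linarith
        rw [h1]
        push_cast [Complex.real_smul]
        ring
      | add a b ha hb => simp only [lieC_add, map_add, ha, hb, neg_add]
    | add a b ha hb =>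
      simp only [lieC_add, map_add, LinearMap.add_apply, ha, hb, neg_add]
  | add a b ha hb => simp only [addC_lie, lieC_add, map_add, LinearMap.add_apply, ha, hb, neg_add]

lemma Bc_conj_real (hB : IsInvariantInner B) (v : ℂ ⊗[ℝ] g) :
    Bc B v (conjA v) = ((B (reT v) (reT v) + B (imT v) (imT v) : ℝ) : ℂ) := by
  set x := reT v with hx
  set y := imT v with hy
  have hc : conjA (inclL x + jL y) = inclL x - jL y := by
    rw [map_add, conjA_inclL, conjA_jL, sub_eq_add_neg]
  conv_lhs => rw [repr_eq v, ← hx, ← hy]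
  rw [hc, inclL_apply, jL_apply]
  simp only [map_add, map_sub, LinearMap.add_apply, LinearMap.sub_apply, Bc_tmul]
  simp only [Complex.real_smul, one_mul, mul_one, Complex.I_mul_I]
  rw [hB.symm y x]
  push_cast
  ring

lemma Bc_conj_eq_zero (hB : IsInvariantInner B) {v : ℂ ⊗[ℝ] g}
    (h : Bc B v (conjA v) = 0) : v = 0 := by
  rw [Bc_conj_real B hB v] at h
  have h' : B (reT v) (reT v) + B (imT v) (imT v) = 0 := by exact_mod_cast h
  have hge : ∀ x : g, 0 ≤ B x x := by
    intro x
    rcases eq_or_ne x 0 with rfl | hx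
    · simp
    · exact le_of_lt (hB.posdef x hx)
  have hr : reT v = 0 := by
    by_contra hne
    have := hB.posdef _ hne
    have := hge (imT v)
    linarith
  have hi : imT v = 0 := by
    by_contra hne
    have := hB.posdef _ hne
    have := hge (reT v)
    linarith
  rw [repr_eq v, hr, hi, map_zero, map_zero, add_zero]

end B

end Aux


section Aux2
variable {g : Type} [LieRing g] [LieAlgebra ℝ g]
variable {B : g →ₗ[ℝ] g →ₗ[ℝ] ℝ} {l : LieSubalgebra ℝ g} {Z : g}

lemma mem_kSub_iff {x : g} : x ∈ kSub l Z ↔ ∃ y ∈ l, ∃ c : ℝ, x = y + c • Z := by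
  unfold kSub
  rw [Submodule.mem_sup]
  constructor
  · rintro ⟨y, hy, z, hz, rfl⟩
    obtain ⟨c, rfl⟩ := Submodule.mem_span_singleton.1 hz
    exact ⟨y, hy, c, rfl⟩
  · rintro ⟨y, hy, c, rfl⟩
    exact ⟨y, hy, c • Z, Submodule.mem_span_singleton.2 ⟨c, rfl⟩, rfl⟩

lemma Z_mem_kSub : Z ∈ kSub l Z :=
  mem_kSub_iff.2 ⟨0, l.zero_mem, 1, by rw [zero_add, one_smul]⟩

lemma l_le_kSub {y : g} (hy : y ∈ l) : y ∈ kSub l Z :=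
  mem_kSub_iff.2 ⟨y, hy, 0, by rw [zero_smul, add_zero]⟩

lemma lie_Z_l (hZ : IsContactElement B l Z) {y : g} (hy : y ∈ l) : ⁅Z, y⁆ = 0 := by
  have h : ⁅y, Z⁆ = 0 := (hZ.cent y).2 ⟨y, hy, 0, by rw [zero_smul, add_zero]⟩
  rw [← lie_skew, h, neg_zero]

lemma lie_Z_kSub (hZ : IsContactElement B l Z) {y : g} (hy : y ∈ kSub l Z) : ⁅Z, y⁆ = 0 := by
  obtain ⟨y0, hy0, c, rfl⟩ := mem_kSub_iff.1 hy
  rw [lie_add, lie_smul, lie_self, smul_zero, add_zero, lie_Z_l hZ hy0]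

lemma lie_mem_l_of_kSub {x y : g} (hZ : IsContactElement B l Z) (hx : x ∈ kSub l Z)
    (hy : y ∈ l) : ⁅x, y⁆ ∈ l := by
  obtain ⟨x0, hx0, c, rfl⟩ := mem_kSub_iff.1 hx
  rw [add_lie, smul_lie, lie_Z_l hZ hy, smul_zero, add_zero]
  exact l.lie_mem hx0 hy

lemma mem_mSub_iff {x : g} : x ∈ mSub B l Z ↔ ∀ y ∈ kSub l Z, B x y = 0 := Iff.rfl

lemma eq_zero_of_mem_kSub_mSub (hB : IsInvariantInner B) {x : g} (hx : x ∈ kSub l Z)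
    (hx' : x ∈ mSub B l Z) : x = 0 := by
  by_contra hne
  exact (hB.posdef x hne).ne' (hx' x hx)

lemma lie_Z_mem_mSub (hB : IsInvariantInner B) (hZ : IsContactElement B l Z) {w : g}
    (hw : w ∈ mSub B l Z) : ⁅Z, w⁆ ∈ mSub B l Z := by
  intro y hy
  have := hB.invariant Z w y
  rw [lie_Z_kSub hZ hy, map_zero] at this
  linarith

lemma mem_kSub_of_lie_Z (hZ : IsContactElement B l Z) {x : g} (h : ⁅x, Z⁆ = 0) :
    x ∈ kSub l Z :=
  mem_kSub_iff.2 ((hZ.cent x).1 h)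

/-- the image of a complex subspace under conjugation, as a subspace. -/
def conjSub (W : Submodule ℂ (ℂ ⊗[ℝ] g)) : Submodule ℂ (ℂ ⊗[ℝ] g) where
  carrier := conjA '' W
  add_mem' := by
    rintro _ _ ⟨u, hu, rfl⟩ ⟨w, hw, rfl⟩
    exact ⟨u + w, W.add_mem hu hw, map_add _ _ _⟩
  zero_mem' := ⟨0, W.zero_mem, map_zero _⟩
  smul_mem' := by
    rintro c _ ⟨u, hu, rfl⟩
    refine ⟨(starRingEnd ℂ c) • u, W.smul_mem _ hu, ?_⟩
    rw [conjA_smul, Complex.conj_conj]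

lemma conjSpan_eq (W : Submodule ℂ (ℂ ⊗[ℝ] g)) : conjSpan W = conjSub W := by
  unfold conjSpan
  rw [show conjA '' (W : Set (ℂ ⊗[ℝ] g)) = ((conjSub W : Submodule ℂ (ℂ ⊗[ℝ] g)) :
    Set (ℂ ⊗[ℝ] g)) from rfl, Submodule.span_eq]

lemma mem_conjSpan {W : Submodule ℂ (ℂ ⊗[ℝ] g)} {v : ℂ ⊗[ℝ] g} :
    v ∈ conjSpan W ↔ conjA v ∈ W := by
  rw [conjSpan_eq]
  constructor
  · rintro ⟨u, hu, rfl⟩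
    rwa [conjA_conjA]
  · intro h
    exact ⟨conjA v, h, conjA_conjA v⟩

variable {m10 : Submodule ℂ (ℂ ⊗[ℝ] g)}

lemma mem_q_iff {v : ℂ ⊗[ℝ] g} :
    v ∈ cx l.toSubmodule ⊔ conjSpan m10 ↔ conjA v ∈ cx l.toSubmodule ⊔ m10 := by
  constructor
  · intro hv
    obtain ⟨a, ha, b, hb, rfl⟩ := Submodule.mem_sup.1 hv
    rw [map_add]
    exact Submodule.add_mem_sup (conjA_mem_cx ha) (mem_conjSpan.1 hb)
  · intro hv
    obtain ⟨a, ha, b, hb, hab⟩ := Submodule.mem_sup.1 hv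
    have : v = conjA a + conjA b := by
      rw [← map_add, hab, conjA_conjA]
    rw [this]
    exact Submodule.add_mem_sup (conjA_mem_cx ha) (mem_conjSpan.2 (by rwa [conjA_conjA]))

lemma q_subalg (hm10 : IsHolo B l Z m10) {x y : ℂ ⊗[ℝ] g}
    (hx : x ∈ cx l.toSubmodule ⊔ conjSpan m10) (hy : y ∈ cx l.toSubmodule ⊔ conjSpan m10) :
    ⁅x, y⁆ ∈ cx l.toSubmodule ⊔ conjSpan m10 := by
  rw [mem_q_iff, conjA_lie]
  exact hm10.subalg _ (mem_q_iff.1 hx) _ (mem_q_iff.1 hy)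

lemma m01_le_cx_mSub (hm10 : IsHolo B l Z m10) {v : ℂ ⊗[ℝ] g} (hv : v ∈ conjSpan m10) :
    v ∈ cx (mSub B l Z) := by
  have : conjA v ∈ cx (mSub B l Z) := hm10.le (mem_conjSpan.1 hv)
  have h2 := conjA_mem_cx this
  rwa [conjA_conjA] at h2

lemma Bq0 (hB : IsInvariantInner B) (hZ : IsContactElement B l Z) (hm10 : IsHolo B l Z m10)
    {u : ℂ ⊗[ℝ] g} (hu : u ∈ cx l.toSubmodule ⊔ conjSpan m10) : Bc B u (inclL Z) = 0 := by
  obtain ⟨a, ha, b, hb, rfl⟩ := Submodule.mem_sup.1 hu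
  have key : ∀ w ∈ cx (mSub B l Z) ⊔ cx l.toSubmodule, Bc B w (inclL Z) = 0 := by
    intro w hw
    obtain ⟨w1, hw1, w2, hw2, rfl⟩ := Submodule.mem_sup.1 hw
    obtain ⟨p1, hp1, p2, hp2, rfl⟩ := mem_cx.1 hw1
    obtain ⟨p3, hp3, p4, hp4, rfl⟩ := mem_cx.1 hw2
    have hBZ : ∀ p : g, p ∈ mSub B l Z ∨ p ∈ l.toSubmodule → B p Z = 0 := by
      rintro p (hp | hp)
      · exact hp Z Z_mem_kSub
      · rw [hB.symm]
        exact hZ.orth p hp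
    simp only [map_add, LinearMap.add_apply, inclL_apply, jL_apply, Bc_tmul]
    rw [hBZ p1 (Or.inl hp1), hBZ p2 (Or.inl hp2), hBZ p3 (Or.inr hp3), hBZ p4 (Or.inr hp4)]
    simp
  rw [map_add, LinearMap.add_apply,
    key a (Submodule.mem_sup_right ha),
    key b (Submodule.mem_sup_left (m01_le_cx_mSub hm10 hb)), add_zero]

lemma inclL_lie_jL (x y : g) : ⁅inclL x, jL y⁆ = jL ⁅x, y⁆ := by
  rw [inclL_apply, jL_apply, lie_tmul, one_mul, jL_apply]

lemma kSub_normalizes (hZ : IsContactElement B l Z) (hstd : IsStandard l Z m10)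
    {x : g} (hx : x ∈ kSub l Z) {v : ℂ ⊗[ℝ] g}
    (hv : v ∈ cx l.toSubmodule ⊔ conjSpan m10) :
    ⁅inclL x, v⁆ ∈ cx l.toSubmodule ⊔ conjSpan m10 := by
  obtain ⟨a, ha, b, hb, rfl⟩ := Submodule.mem_sup.1 hv
  rw [lieC_add]
  refine Submodule.add_mem _ ?_ ?_
  · refine Submodule.mem_sup_left ?_
    obtain ⟨p1, hp1, p2, hp2, rfl⟩ := mem_cx.1 ha
    rw [lieC_add, ← inclL_lie, inclL_lie_jL]
    exact Submodule.add_mem _ (inclL_mem_cx (lie_mem_l_of_kSub hZ hx hp1))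
      (jL_mem_cx (lie_mem_l_of_kSub hZ hx hp2))
  · refine Submodule.mem_sup_right (mem_conjSpan.2 ?_)
    rw [conjA_lie, conjA_inclL]
    exact hstd x hx _ (mem_conjSpan.1 hb)

end Aux2


section Aux3
variable {g : Type} [LieRing g] [LieAlgebra ℝ g]
variable {B : g →ₗ[ℝ] g →ₗ[ℝ] ℝ} {l : LieSubalgebra ℝ g} {Z : g}
variable {m10 : Submodule ℂ (ℂ ⊗[ℝ] g)}

/-- the complex normalizer of `l^ℂ + m⁰¹` in `g^ℂ`, as a complex subspace -/
def Nc (l : LieSubalgebra ℝ g) (m10 : Submodule ℂ (ℂ ⊗[ℝ] g)) : Submodule ℂ (ℂ ⊗[ℝ] g) where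
  carrier := {v | ∀ u ∈ cx l.toSubmodule ⊔ conjSpan m10,
    ⁅v, u⁆ ∈ cx l.toSubmodule ⊔ conjSpan m10}
  add_mem' := by
    intro a b ha hb u hu
    rw [addC_lie]
    exact Submodule.add_mem _ (ha u hu) (hb u hu)
  zero_mem' := by
    intro u hu
    rw [zeroC_lie]
    exact Submodule.zero_mem _
  smul_mem' := by
    intro c a ha u hu
    rw [smulC_lie]
    exact Submodule.smul_mem _ _ (ha u hu)

/-- `ad(Z)` on the complexification, as a complex-linear endomorphism -/
def adZc (Z : g) : Module.End ℂ (ℂ ⊗[ℝ] g) where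
  toFun v := ⁅inclL Z, v⁆
  map_add' a b := lieC_add _ a b
  map_smul' c v := by simpa using lieC_smul c (inclL Z) v

lemma adZc_apply (v : ℂ ⊗[ℝ] g) : adZc Z v = ⁅inclL Z, v⁆ := rfl

lemma adZc_q (hZ : IsContactElement B l Z) (hstd : IsStandard l Z m10) {v : ℂ ⊗[ℝ] g}
    (hv : v ∈ cx l.toSubmodule ⊔ conjSpan m10) :
    adZc Z v ∈ cx l.toSubmodule ⊔ conjSpan m10 :=
  kSub_normalizes hZ hstd Z_mem_kSub hv

lemma adZc_Nc (hZ : IsContactElement B l Z) (hstd : IsStandard l Z m10) {v : ℂ ⊗[ℝ] g}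
    (hv : v ∈ Nc l m10) : adZc Z v ∈ Nc l m10 := by
  intro u hu
  rw [adZc_apply, lieC_lie]
  exact Submodule.sub_mem _ (adZc_q hZ hstd (hv u hu)) (hv _ (adZc_q hZ hstd hu))

lemma adZc_cx_mSub (hB : IsInvariantInner B) (hZ : IsContactElement B l Z) {v : ℂ ⊗[ℝ] g}
    (hv : v ∈ cx (mSub B l Z)) : adZc Z v ∈ cx (mSub B l Z) := by
  obtain ⟨x, hx, y, hy, rfl⟩ := mem_cx.1 hv
  rw [adZc_apply, lieC_add, ← inclL_lie, inclL_lie_jL]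
  exact Submodule.add_mem _ (inclL_mem_cx (lie_Z_mem_mSub hB hZ hx))
    (jL_mem_cx (lie_Z_mem_mSub hB hZ hy))

lemma adZc_ker (hB : IsInvariantInner B) (hZ : IsContactElement B l Z) {v : ℂ ⊗[ℝ] g}
    (hv : v ∈ cx (mSub B l Z)) (h : adZc Z v = 0) : v = 0 := by
  obtain ⟨x, hx, y, hy, rfl⟩ := mem_cx.1 hv
  rw [adZc_apply, lieC_add, ← inclL_lie, inclL_lie_jL] at h
  obtain ⟨h1, h2⟩ := inclL_jL_eq_zero h
  have hx0 : x = 0 := by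
    refine eq_zero_of_mem_kSub_mSub hB (mem_kSub_of_lie_Z hZ ?_) hx
    rw [← lie_skew, h1, neg_zero]
  have hy0 : y = 0 := by
    refine eq_zero_of_mem_kSub_mSub hB (mem_kSub_of_lie_Z hZ ?_) hy
    rw [← lie_skew, h2, neg_zero]
  rw [hx0, hy0, map_zero, map_zero, add_zero]

lemma adZc_skew (hB : IsInvariantInner B) (u w : ℂ ⊗[ℝ] g) :
    Bc B (adZc Z u) (conjA w) = - Bc B u (conjA (adZc Z w)) := by
  rw [adZc_apply, adZc_apply, Bc_inv B hB, conjA_lie, conjA_inclL]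

lemma collapse_step (hB : IsInvariantInner B) (μ : ℂ) (x : ℂ ⊗[ℝ] g)
    (h : (adZc Z - μ • 1) ((adZc Z - μ • 1) x) = 0) : (adZc Z - μ • 1) x = 0 := by
  set N : Module.End ℂ (ℂ ⊗[ℝ] g) := adZc Z - μ • 1 with hN
  set y := N x with hy
  by_contra hy0
  have hAy : adZc Z y = μ • y := by
    have h' : adZc Z y - μ • y = 0 := by
      simpa [hN, LinearMap.sub_apply, LinearMap.smul_apply, Module.End.one_apply] using h
    rw [← sub_eq_zero]
    exact h'
  have hH0 : Bc B y (conjA y) ≠ 0 := fun hc => hy0 (Bc_conj_eq_zero B hB hc)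
  have h1 : Bc B (adZc Z y) (conjA y) = μ * Bc B y (conjA y) := by
    rw [hAy, map_smul, LinearMap.smul_apply, smul_eq_mul]
  have h2 : Bc B (adZc Z y) (conjA y) = -(starRingEnd ℂ μ * Bc B y (conjA y)) := by
    rw [adZc_skew hB, hAy, conjA_smul, map_smul, smul_eq_mul]
  have hμ : starRingEnd ℂ μ = -μ := by
    have h3 : (μ + starRingEnd ℂ μ) * Bc B y (conjA y) = 0 := by
      have := h1.symm.trans h2
      ring_nf
      ring_nf at this
      linear_combination this
    rcases mul_eq_zero.1 h3 with h4 | h4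
    · linear_combination h4
    · exact absurd h4 hH0
  have h5 : Bc B (adZc Z x) (conjA y) = μ * Bc B x (conjA y) := by
    rw [adZc_skew hB, hAy, conjA_smul, map_smul, smul_eq_mul, hμ]
    ring
  have h6 : Bc B y (conjA y) = 0 := by
    have hyx : y = adZc Z x - μ • x := by rw [hy, hN]; rfl
    calc Bc B y (conjA y) = Bc B (adZc Z x) (conjA y) - μ * Bc B x (conjA y) := by
          rw [hyx, map_sub, LinearMap.sub_apply, map_smul, LinearMap.smul_apply, smul_eq_mul]
      _ = 0 := by rw [h5]; ring
  exact hH0 h6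

lemma collapse_pow (hB : IsInvariantInner B) (μ : ℂ) :
    ∀ (k : ℕ) (x : ℂ ⊗[ℝ] g), ((adZc Z - μ • 1) ^ (k + 1)) x = 0 →
      (adZc Z - μ • 1) x = 0 := by
  intro k
  induction k with
  | zero => intro x h; rwa [pow_one] at h
  | succ k ih =>
    intro x h
    rw [pow_succ, Module.End.mul_apply] at h
    exact collapse_step hB μ x (ih _ h)

end Aux3


section Aux4
variable {g : Type} [LieRing g] [LieAlgebra ℝ g]
variable {B : g →ₗ[ℝ] g →ₗ[ℝ] ℝ} {l : LieSubalgebra ℝ g} {Z : g}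
variable {m10 : Submodule ℂ (ℂ ⊗[ℝ] g)}

lemma cx_disjoint_zero {p p' : Submodule ℝ g} (hpp : ∀ t, t ∈ p → t ∈ p' → t = 0)
    {u : ℂ ⊗[ℝ] g} (h1 : u ∈ cx p) (h2 : u ∈ cx p') : u = 0 := by
  have r1 := reT_mem_cx h1
  have r2 := reT_mem_cx h2
  rw [repr_eq u, hpp _ r1.1 r2.1, hpp _ r1.2 r2.2, map_zero, map_zero, add_zero]

lemma mem_m01_of_mem_W [FiniteDimensional ℝ g] (hB : IsInvariantInner B)
    (hZ : IsContactElement B l Z) (hm10 : IsHolo B l Z m10) (hstd : IsStandard l Z m10)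
    {v : ℂ ⊗[ℝ] g} (hv1 : v ∈ cx (mSub B l Z)) (hv2 : v ∈ Nc l m10) :
    v ∈ conjSpan m10 := by
  set W : Submodule ℂ (ℂ ⊗[ℝ] g) := cx (mSub B l Z) ⊓ Nc l m10 with hWdef
  have hWinv : ∀ w ∈ W, adZc Z w ∈ W := fun w hw =>
    Submodule.mem_inf.2 ⟨adZc_cx_mSub hB hZ (Submodule.mem_inf.1 hw).1,
      adZc_Nc hZ hstd (Submodule.mem_inf.1 hw).2⟩
  set Ar : Module.End ℂ W := (adZc Z).restrict hWinv with hArdef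
  have key : ∀ μ : ℂ, Ar.maxGenEigenspace μ ≤ (conjSpan m10).comap W.subtype := by
    intro μ w hw
    obtain ⟨k, hk⟩ := (Module.End.mem_maxGenEigenspace Ar μ w).1 hw
    have hres : ∀ u : W, (((Ar - μ • 1) u : W) : ℂ ⊗[ℝ] g) = (adZc Z - μ • 1) (u : ℂ ⊗[ℝ] g) := by
      intro u
      simp [hArdef, LinearMap.sub_apply, LinearMap.smul_apply, Module.End.one_apply,
        LinearMap.restrict_coe_apply]
    have hco : ∀ (j : ℕ) (u : W),
        ((((Ar - μ • 1) ^ j) u : W) : ℂ ⊗[ℝ] g) = ((adZc Z - μ • 1) ^ j) (u : ℂ ⊗[ℝ] g) := by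
      intro j
      induction j with
      | zero => intro u; simp
      | succ j ih =>
        intro u
        rw [pow_succ, Module.End.mul_apply, pow_succ, Module.End.mul_apply, ih, hres]
    have hamb : ((adZc Z - μ • 1) ^ k) (w : ℂ ⊗[ℝ] g) = 0 := by
      have := congrArg (fun t : W => (t : ℂ ⊗[ℝ] g)) hk
      rw [hco k w] at this
      simpa using this
    rcases Nat.eq_zero_or_pos k with rfl | hkpos
    · have hw0 : (w : ℂ ⊗[ℝ] g) = 0 := by simpa using hamb
      simp [Submodule.mem_comap, hw0]
    · obtain ⟨k', rfl⟩ : ∃ k', k = k' + 1 := ⟨k - 1, (Nat.succ_pred_eq_of_pos hkpos).symm⟩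
      have heig : (adZc Z - μ • 1) (w : ℂ ⊗[ℝ] g) = 0 := collapse_pow hB μ k' _ hamb
      have hAv : adZc Z (w : ℂ ⊗[ℝ] g) = μ • (w : ℂ ⊗[ℝ] g) := by
        rw [← sub_eq_zero]
        simpa [LinearMap.sub_apply, LinearMap.smul_apply, Module.End.one_apply] using heig
      have hvm : (w : ℂ ⊗[ℝ] g) ∈ cx (mSub B l Z) := (Submodule.mem_inf.1 w.2).1
      have hvN : (w : ℂ ⊗[ℝ] g) ∈ Nc l m10 := (Submodule.mem_inf.1 w.2).2
      rcases eq_or_ne μ 0 with rfl | hμ0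
      · have hw0 : (w : ℂ ⊗[ℝ] g) = 0 := adZc_ker hB hZ hvm (by simpa using hAv)
        simp [Submodule.mem_comap, hw0]
      · simp only [Submodule.mem_comap, Submodule.coe_subtype]
        obtain ⟨a, ha, b, hb, hab⟩ := Submodule.mem_sup.1 (hm10.sup_conj hvm)
        have hA_a : adZc Z a ∈ m10 := hstd Z Z_mem_kSub a ha
        have hA_b : adZc Z b ∈ conjSpan m10 := by
          rw [mem_conjSpan, adZc_apply, conjA_lie, conjA_inclL]
          exact hstd Z Z_mem_kSub _ (mem_conjSpan.1 hb)
        have hsum : (adZc Z a - μ • a) + (adZc Z b - μ • b) = 0 := by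
          have hS : adZc Z a + adZc Z b = μ • a + μ • b := by
            have h1 : adZc Z (a + b) = μ • (a + b) := by rw [hab]; exact hAv
            rw [map_add, smul_add] at h1
            exact h1
          rw [show (adZc Z a - μ • a) + (adZc Z b - μ • b)
              = (adZc Z a + adZc Z b) - (μ • a + μ • b) by abel, hS, sub_self]
        have hAa : adZc Z a = μ • a := by
          have h01 : adZc Z a - μ • a ∈ conjSpan m10 := by
            rw [eq_neg_of_add_eq_zero_left hsum]
            exact Submodule.neg_mem _ (Submodule.sub_mem _ hA_b (Submodule.smul_mem _ _ hb))
          have h0 : adZc Z a - μ • a ∈ m10 ⊓ conjSpan m10 :=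
            Submodule.mem_inf.2 ⟨Submodule.sub_mem _ hA_a (Submodule.smul_mem _ _ ha), h01⟩
          rw [hm10.inf_conj] at h0
          rw [← sub_eq_zero]
          exact (Submodule.mem_bot ℂ).1 h0
        have hσa : conjA a ∈ conjSpan m10 := mem_conjSpan.2 (by rwa [conjA_conjA])
        have hq1 : ⁅(w : ℂ ⊗[ℝ] g), conjA a⁆ ∈ cx l.toSubmodule ⊔ conjSpan m10 :=
          hvN _ (Submodule.mem_sup_right hσa)
        have hq2 : ⁅b, conjA a⁆ ∈ cx l.toSubmodule ⊔ conjSpan m10 :=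
          q_subalg hm10 (Submodule.mem_sup_right hb) (Submodule.mem_sup_right hσa)
        have hq3 : ⁅a, conjA a⁆ ∈ cx l.toSubmodule ⊔ conjSpan m10 := by
          have haw : a = (w : ℂ ⊗[ℝ] g) - b := by rw [← hab, add_sub_cancel_right]
          nth_rewrite 1 [haw]
          rw [subC_lie]
          exact Submodule.sub_mem _ hq1 hq2
        have h0 : Bc B ⁅a, conjA a⁆ (inclL Z) = 0 := Bq0 hB hZ hm10 hq3
        rw [Bc_inv B hB] at h0
        have hlie : ⁅a, inclL Z⁆ = -(μ • a) := by
          rw [lieC_skew, ← adZc_apply, hAa]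
        rw [hlie, map_neg, map_smul, smul_eq_mul, neg_neg] at h0
        have ha0 : a = 0 := by
          rcases mul_eq_zero.1 h0 with h | h
          · exact absurd h hμ0
          · exact Bc_conj_eq_zero B hB (by rw [Bc_symm B hB]; exact h)
        have hwb : (w : ℂ ⊗[ℝ] g) = b := by rw [← hab, ha0, zero_add]
        rw [hwb]
        exact hb
  haveI : FiniteDimensional ℂ (ℂ ⊗[ℝ] g) := inferInstance
  have htop := Module.End.iSup_maxGenEigenspace_eq_top Ar
  have hmem : (⟨v, Submodule.mem_inf.2 ⟨hv1, hv2⟩⟩ : W) ∈ (⊤ : Submodule ℂ W) :=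
    Submodule.mem_top
  rw [← htop] at hmem
  have hfin := (iSup_le key) hmem
  simpa [Submodule.mem_comap] using hfin

end Aux4

/-- cf. Theorem 4.9 (1).  Let `Z` be a contact element for `l ⊆ g` and
`m¹⁰` a holomorphic subspace defining a *standard* invariant CR structure (`m¹⁰` is
`ad k`-invariant, `k = l + ℝZ`).  Then the normalizer in `g` of `l^ℂ + m⁰¹` equals `k`:
`N_g(l^ℂ + m⁰¹) = l + ℝZ`.  Consequently the image of the anticanonical map
`φ(gL) = Ad_g(l^ℂ + m⁰¹)` is the flag manifold `F_Z = G/K`, `K = C_G(Z)` (whose isotropy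
algebra is the centralizer of `Z`), and `φ : G/L → F_Z` is the natural `S¹`-fibration. -/
theorem stmt_8 {g : Type} [LieRing g] [LieAlgebra ℝ g] [FiniteDimensional ℝ g]
    (B : g →ₗ[ℝ] g →ₗ[ℝ] ℝ) (hB : IsInvariantInner B)
    (l : LieSubalgebra ℝ g) (Z : g) (hZ : IsContactElement B l Z)
    (m10 : Submodule ℂ (ℂ ⊗[ℝ] g)) (hm10 : IsHolo B l Z m10)
    (hstd : IsStandard l Z m10) :
    normSet l m10 = (kSub l Z : Set g) ∧
    -- the stabilizer subalgebra of the image point coincides with the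
    -- centralizer of `Z`, i.e. with the isotropy algebra of `F_Z = G/K`, `K = C_G(Z)`
    normSet l m10 = {x : g | ⁅x, Z⁆ = 0} := by
  have hmain : normSet l m10 = (kSub l Z : Set g) := by
    ext x
    simp only [normSet, Set.mem_setOf_eq, SetLike.mem_coe]
    constructor
    · intro hx
      -- Step 1: `x` normalizes `l`.
      have hxl : ∀ y ∈ l, ⁅x, y⁆ ∈ l := by
        intro y hy
        have h1 : inclL ⁅x, y⁆ ∈ cx l.toSubmodule ⊔ conjSpan m10 := by
          rw [inclL_lie]
          exact hx _ (Submodule.mem_sup_left (inclL_mem_cx hy))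
        have h2 : inclL ⁅x, y⁆ ∈ cx l.toSubmodule ⊔ m10 := by
          have := mem_q_iff.1 h1
          rwa [conjA_inclL] at this
        obtain ⟨p1, hp1, b1, hb1, hsum1⟩ := Submodule.mem_sup.1 h1
        obtain ⟨p2, hp2, a2, ha2, hsum2⟩ := Submodule.mem_sup.1 h2
        have hd : b1 - a2 = p2 - p1 := by
          have h3 : p1 + b1 = p2 + a2 := hsum1.trans hsum2.symm
          have h4 : b1 - a2 - (p2 - p1) = (p1 + b1) - (p2 + a2) := by abel
          rw [h3, sub_self] at h4
          exact sub_eq_zero.1 h4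
        have hz : b1 - a2 = 0 := by
          refine cx_disjoint_zero (p := kSub l Z) (p' := mSub B l Z)
            (fun t ht ht' => eq_zero_of_mem_kSub_mSub hB ht ht') ?_ ?_
          · rw [hd]
            exact cx_mono (fun t ht => l_le_kSub ht) (Submodule.sub_mem _ hp2 hp1)
          · exact Submodule.sub_mem _ (m01_le_cx_mSub hm10 hb1) (hm10.le ha2)
        have hb10 : b1 ∈ m10 ⊓ conjSpan m10 :=
          Submodule.mem_inf.2 ⟨(sub_eq_zero.1 hz) ▸ ha2, hb1⟩
        rw [hm10.inf_conj] at hb10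
        have hb0 : b1 = 0 := (Submodule.mem_bot ℂ).1 hb10
        have : inclL ⁅x, y⁆ ∈ cx l.toSubmodule := by
          rw [← hsum1, hb0, add_zero]
          exact hp1
        exact inclL_mem_cx_iff.1 this
      -- Step 2: `u = ⁅x, Z⁆` lies in `m`.
      have hum : ⁅x, Z⁆ ∈ mSub B l Z := by
        intro y hy
        obtain ⟨y0, hy0, c, rfl⟩ := mem_kSub_iff.1 hy
        have e1 : B ⁅x, Z⁆ y0 = 0 := by
          have hi := hB.invariant x Z y0
          have horth : B Z ⁅x, y0⁆ = 0 := hZ.orth _ (hxl y0 hy0)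
          linarith
        have e2 : B ⁅x, Z⁆ Z = 0 := by
          have hi := hB.invariant x Z Z
          have hs := hB.symm Z ⁅x, Z⁆
          linarith
        rw [map_add, map_smul, e1, e2, smul_zero, add_zero]
      -- Step 3: `inclL ⁅x, Z⁆` lies in the complex normalizer `Nc`.
      have huN : inclL ⁅x, Z⁆ ∈ Nc l m10 := by
        intro w hw
        rw [inclL_lie, lieC_lie]
        exact Submodule.sub_mem _ (hx _ (adZc_q hZ hstd hw)) (adZc_q hZ hstd (hx w hw))
      -- Step 4: conclude `⁅x, Z⁆ = 0`.
      have h01 : inclL ⁅x, Z⁆ ∈ conjSpan m10 :=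
        mem_m01_of_mem_W hB hZ hm10 hstd (inclL_mem_cx hum) huN
      have h10 : inclL ⁅x, Z⁆ ∈ m10 := by
        have := mem_conjSpan.1 h01
        rwa [conjA_inclL] at this
      have hbot : inclL ⁅x, Z⁆ ∈ m10 ⊓ conjSpan m10 := Submodule.mem_inf.2 ⟨h10, h01⟩
      rw [hm10.inf_conj] at hbot
      exact mem_kSub_of_lie_Z hZ (inclL_inj ((Submodule.mem_bot ℂ).1 hbot))
    · intro hxk v hv
      exact kSub_normalizes hZ hstd hxk hv
  refine ⟨hmain, ?_⟩
  rw [hmain]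
  ext x
  simp only [Set.mem_setOf_eq, SetLike.mem_coe]
  exact ⟨fun h => (hZ.cent x).2 (mem_kSub_iff.1 h), fun h => mem_kSub_of_lie_Z hZ h⟩

end CRPaper
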